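/- arXiv:2311.01628 — 4 statements merged into one kernel-verified Lean document; each statement's English description precedes it below -/
import Mathlib

section
/- Let U ⊆ ℝⁿ be open, let q ∈ ℝ, let y : U → ℝ be of class C² with y > 0 on U, and let φ : U → ℝ be of class C¹. Then at every point of U: y^{2q} (⟪∇y, ∇φ⟫)² ≥ div( (1/2)(1−2q) y^{2q−1} ‖∇y‖² φ² ∇y ) + (1/4)(1−2q)² y^{2q−2} ‖∇y‖⁴ φ² − (1/2)(1−2q) y^{2q−1} ( (Δy) ‖∇y‖² + 2 ⟪∇y, (∇²y) ∇y⟫ ) φ², where ∇²y denotes the Hessian of y and div the Euclidean divergence. -/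
/-- The Euclidean Laplacian of a scalar function. -/
noncomputable def lap {n : ℕ} (f : EuclideanSpace ℝ (Fin n) → ℝ)
    (x : EuclideanSpace ℝ (Fin n)) : ℝ :=
  ∑ i, fderiv ℝ (fun z => fderiv ℝ f z (EuclideanSpace.single i 1)) x (EuclideanSpace.single i 1)

/-- The Euclidean divergence of a vector field. -/
noncomputable def diverg {n : ℕ}
    (V : EuclideanSpace ℝ (Fin n) → EuclideanSpace ℝ (Fin n))
    (x : EuclideanSpace ℝ (Fin n)) : ℝ :=
  ∑ i, fderiv ℝ V x (EuclideanSpace.single i 1) i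

/-!
With `a = (1 - 2q)/2` and weight `h = a y^{2q-1} ‖∇y‖² φ²`, the product rule gives
`div (h ∇y) = ⟪∇h, ∇y⟫ + h Δy`, and `⟪∇h, ∇y⟫` contains the term
`2 a y^{2q-1} ⟪∇y, (∇²y) ∇y⟫ φ²`. So the Laplacian and Hessian terms cancel exactly, and
the difference of the two sides is the square `y^{2q-2} (y ⟪∇y, ∇φ⟫ - a ‖∇y‖² φ)²`.
-/

open InnerProductSpace

theorem fderiv_fderiv_apply_const {𝕜 E G : Type*} [NontriviallyNormedField 𝕜]
    [NormedAddCommGroup E] [NormedSpace 𝕜 E] [NormedAddCommGroup G] [NormedSpace 𝕜 G]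
    {f : E → G} {x : E} (hf : DifferentiableAt 𝕜 (fderiv 𝕜 f) x) (v w : E) :
    fderiv 𝕜 (fun z => fderiv 𝕜 f z w) x v = fderiv 𝕜 (fderiv 𝕜 f) x v w := by
  simp [fderiv_clm_apply hf (differentiableAt_const w)]

section Gradient

variable {F : Type*} [NormedAddCommGroup F] [InnerProductSpace ℝ F] [CompleteSpace F]
  {y : F → ℝ} {x : F}

theorem hasFDerivAt_gradient (hy : DifferentiableAt ℝ (fderiv ℝ y) x) :
    HasFDerivAt (gradient y) ((toDual ℝ F).symm.toContinuousLinearEquiv.toContinuousLinearMap.comp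
      (fderiv ℝ (fderiv ℝ y) x)) x :=
  (toDual ℝ F).symm.toContinuousLinearEquiv.toContinuousLinearMap.hasFDerivAt.comp x
    hy.hasFDerivAt

theorem inner_fderiv_gradient_apply (hy : DifferentiableAt ℝ (fderiv ℝ y) x) (v w : F) :
    inner ℝ (fderiv ℝ (gradient y) x v) w = fderiv ℝ (fderiv ℝ y) x v w := by
  rw [(hasFDerivAt_gradient hy).fderiv]
  exact toDual_symm_apply

end Gradient

theorem rpow_sub_one_eq_rpow_sub_two_mul {A : ℝ} (hA : 0 < A) (p : ℝ) :
    A ^ (p - 1) = A ^ (p - 2) * A := by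
  rw [← Real.rpow_add_one hA.ne']; ring_nf

theorem rpow_eq_rpow_sub_two_mul_sq {A : ℝ} (hA : 0 < A) (p : ℝ) :
    A ^ p = A ^ (p - 2) * A ^ 2 := by
  rw [← Real.rpow_natCast, ← Real.rpow_add hA]; norm_num

section Euclidean

variable {n : ℕ} {x : EuclideanSpace ℝ (Fin n)}

theorem sum_apply_single_mul_apply (L : EuclideanSpace ℝ (Fin n) →L[ℝ] ℝ)
    (v : EuclideanSpace ℝ (Fin n)) : ∑ i, L (EuclideanSpace.single i 1) * v i = L v := by
  conv_rhs => rw [← (EuclideanSpace.basisFun (Fin n) ℝ).sum_repr v]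
  simp [mul_comm]

theorem diverg_smul {h : EuclideanSpace ℝ (Fin n) → ℝ}
    {Dh : EuclideanSpace ℝ (Fin n) →L[ℝ] ℝ}
    {V : EuclideanSpace ℝ (Fin n) → EuclideanSpace ℝ (Fin n)}
    (hh : HasFDerivAt h Dh x) (hV : DifferentiableAt ℝ V x) :
    diverg (fun z => h z • V z) x = Dh (V x) + h x * diverg V x := by
  rw [diverg, diverg, (hh.fun_smul hV.hasFDerivAt).fderiv]
  simp only [add_apply, smul_apply, ContinuousLinearMap.smulRight_apply, PiLp.add_apply,
    PiLp.smul_apply, smul_eq_mul, Finset.sum_add_distrib, ← Finset.mul_sum,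
    sum_apply_single_mul_apply]
  ring

theorem diverg_gradient {y : EuclideanSpace ℝ (Fin n) → ℝ}
    (hy : DifferentiableAt ℝ (fderiv ℝ y) x) : diverg (gradient y) x = lap y x := by
  refine Finset.sum_congr rfl fun i _ => ?_
  rw [fderiv_fderiv_apply_const hy, ← inner_fderiv_gradient_apply hy,
    real_inner_comm, EuclideanSpace.inner_single_left]
  simp

end Euclidean

/-- The pointwise Hardy-type inequality (Proposition 2.8): for `y > 0` of class `C²` and
`φ` of class `C¹` on an open set `U`, at every point of `U` one has
`y^{2q} (⟪∇y,∇φ⟫)² ≥ div((1/2)(1-2q) y^{2q-1} ‖∇y‖² φ² ∇y)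
  + (1/4)(1-2q)² y^{2q-2} ‖∇y‖⁴ φ²
  - (1/2)(1-2q) y^{2q-1} ((Δy)‖∇y‖² + 2⟪∇y,(∇²y)∇y⟫) φ²`. -/
theorem stmt_7 (n : ℕ) (U : Set (EuclideanSpace ℝ (Fin n))) (hU : IsOpen U)
    (q : ℝ) (y φ : EuclideanSpace ℝ (Fin n) → ℝ)
    (hy : ContDiffOn ℝ 2 y U) (hypos : ∀ x ∈ U, 0 < y x)
    (hφ : ContDiffOn ℝ 1 φ U) :
    ∀ x ∈ U,
      (y x) ^ (2*q) * (inner ℝ (gradient y x) (gradient φ x) : ℝ)^2 ≥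
        diverg (fun z =>
            ((1/2) * (1 - 2*q) * (y z) ^ (2*q - 1) * ‖gradient y z‖^2 * (φ z)^2)
              • gradient y z) x
        + (1/4) * (1 - 2*q)^2 * (y x) ^ (2*q - 2) * ‖gradient y x‖^4 * (φ x)^2
        - (1/2) * (1 - 2*q) * (y x) ^ (2*q - 1) *
            (lap y x * ‖gradient y x‖^2
              + 2 * fderiv ℝ (fun z => fderiv ℝ y z (gradient y x)) x (gradient y x))
            * (φ x)^2 := by
  intro x hx
  have hyx : ContDiffAt ℝ 2 y x := hy.contDiffAt (hU.mem_nhds hx)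
  have hdy : DifferentiableAt ℝ y x := hyx.differentiableAt two_ne_zero
  have hDy : DifferentiableAt ℝ (fderiv ℝ y) x :=
    (hyx.fderiv_right le_rfl).differentiableAt one_ne_zero
  have hdφ : DifferentiableAt ℝ φ x :=
    (hφ.contDiffAt (hU.mem_nhds hx)).differentiableAt one_ne_zero
  have hA := hypos x hx
  have hweight : HasFDerivAt (fun z =>
      (1/2) * (1 - 2*q) * (y z) ^ (2*q - 1) * ‖gradient y z‖^2 * (φ z)^2) _ x :=
    (((hdy.hasFDerivAt.rpow_const (p := 2*q-1) (Or.inl hA.ne')).const_mul ((1/2)*(1-2*q))).mul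
      (hasFDerivAt_gradient hDy).differentiableAt.hasFDerivAt.norm_sq).mul (hdφ.hasFDerivAt.pow 2)
  rw [diverg_smul hweight (hasFDerivAt_gradient hDy).differentiableAt, diverg_gradient hDy,
    fderiv_fderiv_apply_const hDy]
  simp only [add_apply, smul_apply, smul_eq_mul, nsmul_eq_mul, ContinuousLinearMap.comp_apply,
    innerSL_apply_apply, Pi.mul_apply]
  rw [real_inner_comm (fderiv ℝ (gradient y) x _), inner_fderiv_gradient_apply hDy,
    ← inner_gradient_left (f := φ), ← inner_gradient_left (f := y), real_inner_self_eq_norm_sq,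
    real_inner_comm (gradient φ x), show 2*q - 1 - 1 = 2*q - 2 by ring,
    rpow_sub_one_eq_rpow_sub_two_mul hA, rpow_eq_rpow_sub_two_mul_sq hA]
  linear_combination mul_nonneg (Real.rpow_nonneg hA.le (2*q - 2)) (sq_nonneg (y x *
    inner ℝ (gradient φ x) (gradient y x) - (1/2) * (1 - 2*q) * ‖gradient y x‖^2 * φ x))
end

section
/- Let U ⊆ ℝⁿ be open, let σ, κ be real numbers with σ = κ(1−κ), let x ∈ U, and let y, G : U → ℝ be twice differentiable at x with y(x) > 0, ‖∇y(x)‖ = 1, and ⟪∇y(x), ∇G(x)⟫ = 0. Then Δ(y^κ G)(x) + σ y(x)^{−2} · y(x)^κ G(x) = y(x)^κ ΔG(x) + κ y(x)^{κ−1} Δy(x) · G(x); in particular the inverse-square singularity cancels against the Dirichlet-branch profile y^κ. -/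
open Topology Filter InnerProductSpace
open scoped Gradient

section

variable {E F : Type*} [NormedAddCommGroup E] [NormedSpace ℝ E]
  [NormedAddCommGroup F] [NormedSpace ℝ F]

theorem ContDiffAt.differentiableAt_fderiv_apply {f : E → F} {x : E} (hf : ContDiffAt ℝ 2 f x)
    (v : E) : DifferentiableAt ℝ (fun z => fderiv ℝ f z v) x :=
  ((hf.fderiv_right le_rfl).differentiableAt one_ne_zero).clm_apply (differentiableAt_const v)

theorem ContDiffAt.eventually_differentiableAt {f : E → F} {x : E} (hf : ContDiffAt ℝ 2 f x) :
    ∀ᶠ z in 𝓝 x, DifferentiableAt ℝ f z :=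
  (hf.eventually (by simp)).mono fun _ hz => hz.differentiableAt two_ne_zero

end

section

variable {F : Type*} [NormedAddCommGroup F] [InnerProductSpace ℝ F] [CompleteSpace F]

theorem gradient_comp_eq_deriv_smul {φ : ℝ → ℝ} {y : F → ℝ} {x : F}
    (hφ : DifferentiableAt ℝ φ (y x)) (hy : DifferentiableAt ℝ y x) :
    ∇ (fun z => φ (y z)) x = deriv φ (y x) • ∇ y x := by
  have h := hφ.hasDerivAt.comp_hasFDerivAt x hy.hasFDerivAt
  rw [gradient, gradient, show (fun z => φ (y z)) = φ ∘ y from rfl, h.fderiv]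
  simp

end

theorem EuclideanSpace.inner_gradient_eq_sum {ι : Type*} [Fintype ι] [DecidableEq ι]
    (u v : EuclideanSpace ℝ ι → ℝ) (x : EuclideanSpace ℝ ι) :
    ⟪∇ u x, ∇ v x⟫_ℝ =
      ∑ i, fderiv ℝ u x (EuclideanSpace.single i 1) * fderiv ℝ v x (EuclideanSpace.single i 1) := by
  rw [← (EuclideanSpace.basisFun ι ℝ).sum_inner_mul_inner]
  simp [inner_gradient_left]

section

variable {n : ℕ} {x : EuclideanSpace ℝ (Fin n)}

theorem lap_mul {u v : EuclideanSpace ℝ (Fin n) → ℝ}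
    (hu : ContDiffAt ℝ 2 u x) (hv : ContDiffAt ℝ 2 v x) :
    lap (fun z => u z * v z) x = u x * lap v x + v x * lap u x + 2 * ⟪∇ u x, ∇ v x⟫_ℝ := by
  have hfirst : ∀ w, (fun z => fderiv ℝ (fun z => u z * v z) z w) =ᶠ[𝓝 x]
      fun z => u z * fderiv ℝ v z w + v z * fderiv ℝ u z w := by
    intro w
    filter_upwards [hu.eventually_differentiableAt, hv.eventually_differentiableAt]
      with z hzu hzv
    simp [fderiv_fun_mul hzu hzv]
  have hsecond : ∀ w, fderiv ℝ (fun z => fderiv ℝ (fun z => u z * v z) z w) x w =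
      u x * fderiv ℝ (fun z => fderiv ℝ v z w) x w + v x * fderiv ℝ (fun z => fderiv ℝ u z w) x w
        + 2 * (fderiv ℝ u x w * fderiv ℝ v x w) := by
    intro w
    have hu1 := (hu.differentiableAt two_ne_zero).hasFDerivAt
    have hv1 := (hv.differentiableAt two_ne_zero).hasFDerivAt
    have h : HasFDerivAt (fun z => u z * fderiv ℝ v z w + v z * fderiv ℝ u z w) _ x :=
      (hu1.mul (hv.differentiableAt_fderiv_apply w).hasFDerivAt).add
        (hv1.mul (hu.differentiableAt_fderiv_apply w).hasFDerivAt)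
    rw [(hfirst w).fderiv_eq, h.fderiv]
    simp only [add_apply, smul_apply, smul_eq_mul]
    ring
  simp only [lap, hsecond, Finset.sum_add_distrib, ← Finset.mul_sum,
    EuclideanSpace.inner_gradient_eq_sum]

theorem lap_comp {φ : ℝ → ℝ} {y : EuclideanSpace ℝ (Fin n) → ℝ}
    (hφ : ContDiffAt ℝ 2 φ (y x)) (hy : ContDiffAt ℝ 2 y x) :
    lap (fun z => φ (y z)) x = deriv φ (y x) * lap y x + deriv (deriv φ) (y x) * ‖∇ y x‖ ^ 2 := by
  have hfirst : ∀ w, (fun z => fderiv ℝ (fun z => φ (y z)) z w) =ᶠ[𝓝 x]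
      fun z => deriv φ (y z) * fderiv ℝ y z w := by
    intro w
    filter_upwards [hy.continuousAt.tendsto.eventually hφ.eventually_differentiableAt,
      hy.eventually_differentiableAt] with z hzφ hzy
    have h : HasFDerivAt (fun z => φ (y z)) _ z := hzφ.hasDerivAt.comp_hasFDerivAt z hzy.hasFDerivAt
    simp [h.fderiv]
  have hsecond : ∀ w, fderiv ℝ (fun z => fderiv ℝ (fun z => φ (y z)) z w) x w =
      deriv φ (y x) * fderiv ℝ (fun z => fderiv ℝ y z w) x w
        + deriv (deriv φ) (y x) * (fderiv ℝ y x w * fderiv ℝ y x w) := by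
    intro w
    have hφ' : DifferentiableAt ℝ (deriv φ) (y x) := hφ.differentiableAt_fderiv_apply 1
    have h : HasFDerivAt (fun z => deriv φ (y z) * fderiv ℝ y z w) _ x :=
      (hφ'.hasDerivAt.comp_hasFDerivAt x (hy.differentiableAt two_ne_zero).hasFDerivAt).mul
        (hy.differentiableAt_fderiv_apply w).hasFDerivAt
    rw [(hfirst w).fderiv_eq, h.fderiv]
    simp only [add_apply, smul_apply, smul_eq_mul, Function.comp_apply]
    ring
  simp only [lap, hsecond, Finset.sum_add_distrib, ← Finset.mul_sum, ← real_inner_self_eq_norm_sq,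
    EuclideanSpace.inner_gradient_eq_sum]

end

theorem stmt_10_general (n : ℕ)
    (σ κ : ℝ) (hσκ : σ = κ * (1 - κ))
    (x : EuclideanSpace ℝ (Fin n))
    (y G : EuclideanSpace ℝ (Fin n) → ℝ)
    (hy : ContDiffAt ℝ 2 y x) (hG : ContDiffAt ℝ 2 G x)
    (hypos : 0 < y x) (heik : ‖gradient y x‖ = 1)
    (horth : (inner ℝ (gradient y x) (gradient G x) : ℝ) = 0) :
    lap (fun z => (y z) ^ (κ:ℝ) * G z) x + σ * ((y x)^2)⁻¹ * ((y x) ^ (κ:ℝ) * G x) =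
      (y x) ^ (κ:ℝ) * lap G x + κ * (y x) ^ (κ - 1) * lap y x * G x := by
  have hpow : ContDiffAt ℝ 2 (fun t : ℝ => t ^ κ) (y x) :=
    Real.contDiffAt_rpow_const_of_ne hypos.ne'
  have hpow_deriv2 : deriv (deriv fun t : ℝ => t ^ κ) (y x) = κ * (κ - 1) * y x ^ (κ - 2) := by
    simp [Real.deriv_rpow_const', Real.deriv_rpow_const, sub_sub, one_add_one_eq_two, mul_assoc]
  have hy_sq : y x ^ (κ - 2) = ((y x) ^ 2)⁻¹ * y x ^ κ := by
    rw [Real.rpow_sub hypos, Real.rpow_two, div_eq_inv_mul]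
  rw [lap_mul (u := fun z => y z ^ κ) (hpow.comp x hy) hG, lap_comp hpow hy,
    gradient_comp_eq_deriv_smul (hpow.differentiableAt two_ne_zero) (hy.differentiableAt two_ne_zero),
    real_inner_smul_left, horth, heik, hpow_deriv2, Real.deriv_rpow_const, hσκ, hy_sq]
  ring

/-- The cancellation identity (equation (2.41)): if `σ = κ(1-κ)`, `y(x) > 0`,
`‖∇y(x)‖ = 1` and `⟪∇y(x), ∇G(x)⟫ = 0`, then
`Δ(y^κ G)(x) + σ y(x)⁻² (y(x)^κ G(x)) = y(x)^κ ΔG(x) + κ y(x)^{κ-1} Δy(x) G(x)`;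
in particular the inverse-square singularity cancels against the Dirichlet branch `y^κ`. -/
theorem stmt_10 (n : ℕ) (U : Set (EuclideanSpace ℝ (Fin n))) (hU : IsOpen U)
    (σ κ : ℝ) (hσκ : σ = κ * (1 - κ))
    (x : EuclideanSpace ℝ (Fin n)) (hx : x ∈ U)
    (y G : EuclideanSpace ℝ (Fin n) → ℝ)
    (hy : ContDiffAt ℝ 2 y x) (hG : ContDiffAt ℝ 2 G x)
    (hypos : 0 < y x) (heik : ‖gradient y x‖ = 1)
    (horth : (inner ℝ (gradient y x) (gradient G x) : ℝ) = 0) :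
    lap (fun z => (y z) ^ (κ:ℝ) * G z) x + σ * ((y x)^2)⁻¹ * ((y x) ^ (κ:ℝ) * G x) =
      (y x) ^ (κ:ℝ) * lap G x + κ * (y x) ^ (κ - 1) * lap y x * G x :=
  stmt_10_general n σ κ hσκ x y G hy hG hypos heik horth
end

section
/- Let H be a real normed vector space and K a real inner product space, let N : H → K and ℓ : H → ℝ be continuous linear maps, let ε > 0, and define J : H → ℝ by J(u) := ε‖u‖ + (1/2)‖N u‖² + ℓ(u). If φ ∈ H is a global minimizer of J, i.e. J(φ) ≤ J(u) for all u ∈ H, then for every u ∈ H: |⟪N φ, N u⟫ + ℓ(u)| ≤ ε ‖u‖. -/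
/-!
A minimizer `φ` of `ε‖·‖ + F` with `F u = ½‖N u‖² + ℓ u` also minimizes `v ↦ F v + ε‖v - φ‖`,
by the triangle inequality. Restricting to the ray `t ↦ φ + t • u`, `t ≥ 0`, where this function
is differentiable, Fermat's rule gives `F'(φ) u + ε‖u‖ ≥ 0`; replacing `u` by `-u` gives the
other inequality, and `F'(φ) u = ⟪N φ, N u⟫ + ℓ u`.
-/

open Set

section FirstVariation

variable {E : Type*} [NormedAddCommGroup E] {F : E → ℝ} {a : E} {c : ℝ}

theorem le_add_mul_norm_sub_of_forall_mul_norm_add_le (hc : 0 ≤ c)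
    (hmin : ∀ v, c * ‖a‖ + F a ≤ c * ‖v‖ + F v) (v : E) : F a ≤ F v + c * ‖v - a‖ := by
  have hnorm : c * ‖v‖ ≤ c * ‖a‖ + c * ‖v - a‖ := by
    rw [← mul_add]
    exact mul_le_mul_of_nonneg_left (norm_le_norm_add_norm_sub' v a) hc
  linarith [hmin v]

variable [NormedSpace ℝ E]

theorem HasFDerivAt.neg_mul_norm_le_apply_of_forall_le_add_mul_norm_sub {F' : E →L[ℝ] ℝ}
    (hF : HasFDerivAt F F' a) (hmin : ∀ v, F a ≤ F v + c * ‖v - a‖) (u : E) :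
    -(c * ‖u‖) ≤ F' u := by
  set g : ℝ → ℝ := fun t ↦ F (a + t • u) + t * (c * ‖u‖)
  have hline : HasDerivAt (fun t : ℝ ↦ a + t • u) u 0 := by
    simpa using ((hasDerivAt_id (0 : ℝ)).smul_const u).const_add a
  have hg : HasDerivAt g (F' u + c * ‖u‖) 0 := by
    have hFline : HasDerivAt (fun t : ℝ ↦ F (a + t • u)) (F' u) 0 :=
      (by simpa using hF : HasFDerivAt F F' (a + (0 : ℝ) • u)).comp_hasDerivAt 0 hline
    exact hFline.add (hasDerivAt_mul_const (c * ‖u‖))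
  have hgmin : IsMinOn g (Ici 0) 0 := by
    intro t (ht : 0 ≤ t)
    have hray := hmin (a + t • u)
    rw [add_sub_cancel_left, norm_smul, Real.norm_of_nonneg ht] at hray
    show g 0 ≤ g t
    simp only [g, zero_smul, add_zero, zero_mul]
    linarith
  have hone : (1 : ℝ) ∈ posTangentConeAt (Ici 0) 0 :=
    mem_posTangentConeAt_of_segment_subset (by simp [segment_eq_Icc, Icc_subset_Ici_self])
  have hderiv : 0 ≤ F' u + c * ‖u‖ := by
    simpa using hgmin.localize.hasFDerivWithinAt_nonneg hg.hasFDerivAt.hasFDerivWithinAt hone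
  linarith

theorem HasFDerivAt.abs_apply_le_of_forall_le_add_mul_norm_sub {F' : E →L[ℝ] ℝ}
    (hF : HasFDerivAt F F' a) (hmin : ∀ v, F a ≤ F v + c * ‖v - a‖) (u : E) :
    |F' u| ≤ c * ‖u‖ := by
  have hneg := hF.neg_mul_norm_le_apply_of_forall_le_add_mul_norm_sub hmin (-u)
  rw [map_neg, norm_neg] at hneg
  exact abs_le.2 ⟨hF.neg_mul_norm_le_apply_of_forall_le_add_mul_norm_sub hmin u, by linarith⟩

end FirstVariation

/-- Abstract variational inequality from the first-variation argument for the HUM functional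
(Lemma 5.3): if `φ` is a global minimizer of `J(u) = ε‖u‖ + (1/2)‖N u‖² + ℓ(u)`,
then `|⟪N φ, N u⟫ + ℓ(u)| ≤ ε ‖u‖` for every `u`. -/
theorem stmt_16 {H K : Type*} [NormedAddCommGroup H] [NormedSpace ℝ H]
    [NormedAddCommGroup K] [InnerProductSpace ℝ K]
    (N : H →L[ℝ] K) (l : H →L[ℝ] ℝ) (ε : ℝ) (hε : 0 < ε)
    (J : H → ℝ) (hJ : ∀ u, J u = ε * ‖u‖ + (1/2) * ‖N u‖^2 + l u)
    (φ : H) (hφ : ∀ u, J φ ≤ J u) :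
    ∀ u : H, |(inner ℝ (N φ) (N u) : ℝ) + l u| ≤ ε * ‖u‖ := by
  set F : H → ℝ := fun v ↦ (1/2) * ‖N v‖^2 + l v
  have hF : HasFDerivAt F ((innerSL ℝ (N φ)).comp N + l) φ :=
    ((N.hasFDerivAt.norm_sq.const_mul (1/2 : ℝ)).add l.hasFDerivAt).congr_fderiv <| by
      ext v
      simp
  have hmin : ∀ v, F φ ≤ F v + ε * ‖v - φ‖ :=
    le_add_mul_norm_sub_of_forall_mul_norm_add_le hε.le fun v ↦ by
      simpa only [hJ, F, add_assoc] using hφ v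
  intro u
  simpa using hF.abs_apply_le_of_forall_le_add_mul_norm_sub hmin u
end

section
/- Let H and K be real Hilbert spaces, let N : H → K be an injective continuous linear map, let ℓ : H → ℝ be a continuous linear functional, let ε > 0, and define J(u) := ε‖u‖ + (1/2)‖N u‖² + ℓ(u). Then J attains a global minimum: there exists φ ∈ H such that J(φ) ≤ J(u) for all u ∈ H. -/
/-!
`J` is convex and continuous, hence weakly lower semicontinuous, and closed balls of a Hilbert
space are weakly compact (Riesz representation and Banach–Alaoglu), so `J` has a minimizer on
every ball. For coercivity, `‖N ·‖` is weakly lower semicontinuous and, `N` being injective, does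
not vanish on the weakly compact set `{‖v‖ ≤ 1, ℓ v ≤ -ε}`, so it is bounded below there by some
`δ > 0`. Along the direction of any `u ≠ 0`, either `ℓ u > -ε‖u‖` and then `J u > 0`, or
`‖N u‖ ≥ δ‖u‖` and then `J u > 0` as soon as `‖u‖ > 2‖ℓ‖/δ²`. Hence `J > J 0` outside a ball,
and the minimizer on that ball is global.
-/

open Set Metric Bornology InnerProductSpace

theorem ConvexOn.lowerSemicontinuous_comp_toWeakSpace_symm {E : Type*} [AddCommGroup E]
    [Module ℝ E] [TopologicalSpace E] [IsTopologicalAddGroup E] [ContinuousSMul ℝ E]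
    [LocallyConvexSpace ℝ E] {f : E → ℝ} (hf : ConvexOn ℝ univ f)
    (hf' : LowerSemicontinuous f) :
    LowerSemicontinuous (f ∘ (toWeakSpace ℝ E).symm) := by
  rw [lowerSemicontinuous_iff_isClosed_preimage] at hf' ⊢
  intro y
  have hconv : Convex ℝ (f ⁻¹' Iic y) := by
    convert hf.convex_le y using 1
    ext
    simp
  rw [preimage_comp, ← LinearEquiv.image_eq_preimage_symm, ← (hf' y).closure_eq,
    hconv.toWeakSpace_closure ℝ]
  exact isClosed_closure

section Hilbert

variable {H : Type*} [NormedAddCommGroup H] [InnerProductSpace ℝ H] [CompleteSpace H]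

theorem Convex.isCompact_toWeakSpace_image {s : Set H} (hs : Convex ℝ s) (hc : IsClosed s)
    (hb : IsBounded s) : IsCompact (toWeakSpace ℝ H '' s) := by
  obtain ⟨R, hR⟩ := hb.subset_closedBall 0
  -- The Riesz map is continuous from the weak-star to the weak topology.
  let ψ : WeakDual ℝ H → WeakSpace ℝ H :=
    fun x => toWeakSpace ℝ H ((toDual ℝ H).symm (WeakDual.toStrongDual x))
  have hψ : Continuous ψ := by
    refine WeakBilin.continuous_of_continuous_eval _ fun f => ?_
    have key : ∀ x : WeakDual ℝ H,
        (topDualPairing ℝ H).flip (ψ x) f = x ((toDual ℝ H).symm f) := by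
      intro x
      change f ((toDual ℝ H).symm _) = _
      conv_lhs => rw [← (toDual ℝ H).apply_symm_apply f]
      rw [toDual_apply_apply, real_inner_comm, toDual_symm_apply]
      rfl
    simpa only [key] using WeakDual.eval_continuous _
  refine ((WeakDual.isCompact_closedBall (0 : StrongDual ℝ H) R).image hψ).of_isClosed_subset
    ?_ ?_
  · rw [← hc.closure_eq, hs.toWeakSpace_closure ℝ]
    exact isClosed_closure
  · rintro _ ⟨x, hx, rfl⟩
    exact ⟨StrongDual.toWeakDual (toDual ℝ H x), by simpa using hR hx, by simp [ψ]⟩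

variable {f : H → ℝ} {s : Set H}

theorem ConvexOn.exists_isMinOn_of_isBounded (hf : ConvexOn ℝ univ f)
    (hf' : LowerSemicontinuous f) (hs : Convex ℝ s) (hc : IsClosed s) (hb : IsBounded s)
    (hne : s.Nonempty) : ∃ a ∈ s, IsMinOn f s a := by
  obtain ⟨_, ⟨a, ha, rfl⟩, hmin⟩ :=
    ((hf.lowerSemicontinuous_comp_toWeakSpace_symm hf').lowerSemicontinuousOn _).exists_isMinOn
      (hne.image _) (hs.isCompact_toWeakSpace_image hc hb)
  exact ⟨a, ha, fun x hx => by simpa using hmin ⟨x, hx, rfl⟩⟩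

theorem ConvexOn.exists_pos_le_of_isBounded (hf : ConvexOn ℝ univ f)
    (hf' : LowerSemicontinuous f) (hs : Convex ℝ s) (hc : IsClosed s) (hb : IsBounded s)
    (hpos : ∀ x ∈ s, 0 < f x) : ∃ δ > 0, ∀ x ∈ s, δ ≤ f x := by
  rcases s.eq_empty_or_nonempty with rfl | hne
  · exact ⟨1, one_pos, by simp⟩
  · obtain ⟨a, ha, hmin⟩ := hf.exists_isMinOn_of_isBounded hf' hs hc hb hne
    exact ⟨f a, hpos a ha, fun x hx => hmin hx⟩

end Hilbert

section HUM

variable {E F : Type*} [NormedAddCommGroup E] [NormedSpace ℝ E] [NormedAddCommGroup F]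
  [NormedSpace ℝ F]

/-- The functional `I_ε` of the Hilbert Uniqueness Method. -/
noncomputable def humFunctional (N : E →L[ℝ] F) (l : E →L[ℝ] ℝ) (ε : ℝ) (u : E) : ℝ :=
  ε * ‖u‖ + (1/2) * ‖N u‖^2 + l u

theorem convexOn_humFunctional (N : E →L[ℝ] F) (l : E →L[ℝ] ℝ) {ε : ℝ} (hε : 0 ≤ ε) :
    ConvexOn ℝ univ (humFunctional N l ε) := by
  have hNsq : ConvexOn ℝ univ fun u => ‖N u‖ ^ 2 :=
    ((convexOn_norm convex_univ).comp_linearMap N.toLinearMap).pow (fun _ _ => norm_nonneg _) 2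
  exact (((convexOn_norm convex_univ).smul hε).add (hNsq.smul (by norm_num))).add
    (l.toLinearMap.convexOn convex_univ)

theorem continuous_humFunctional (N : E →L[ℝ] F) (l : E →L[ℝ] ℝ) (ε : ℝ) :
    Continuous (humFunctional N l ε) := by
  unfold humFunctional
  fun_prop

end HUM

section Coercivity

variable {H K : Type*} [NormedAddCommGroup H] [InnerProductSpace ℝ H] [CompleteSpace H]
  [NormedAddCommGroup K] [NormedSpace ℝ K] {N : H →L[ℝ] K}

theorem exists_pos_le_norm_apply_of_injective (hN : Function.Injective N) (l : H →L[ℝ] ℝ)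
    {ε : ℝ} (hε : 0 < ε) : ∃ δ > 0, ∀ v, ‖v‖ ≤ 1 → l v ≤ -ε → δ ≤ ‖N v‖ := by
  have hpos : ∀ v ∈ closedBall 0 1 ∩ {v | l v ≤ -ε}, 0 < ‖N v‖ := by
    rintro v ⟨-, hv⟩
    refine norm_pos_iff.2 fun hNv => ?_
    have hl0 : l 0 ≤ -ε := (map_eq_zero_iff N hN).1 hNv ▸ hv
    linarith [map_zero l]
  obtain ⟨δ, hδ, hle⟩ := ((convexOn_norm convex_univ).comp_linearMap N.toLinearMap)
    |>.exists_pos_le_of_isBounded N.continuous.norm.lowerSemicontinuous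
      ((convex_closedBall 0 1).inter (convex_halfSpace_le l.isLinear _))
      (isClosed_closedBall.inter (isClosed_le l.continuous continuous_const))
      (isBounded_closedBall.subset inter_subset_left) hpos
  exact ⟨δ, hδ, fun v hv hlv => hle v ⟨mem_closedBall_zero_iff.2 hv, hlv⟩⟩

theorem exists_humFunctional_pos_of_lt_norm (hN : Function.Injective N) (l : H →L[ℝ] ℝ)
    {ε : ℝ} (hε : 0 < ε) : ∃ R, ∀ u, R < ‖u‖ → 0 < humFunctional N l ε u := by
  obtain ⟨δ, hδ, hNδ⟩ := exists_pos_le_norm_apply_of_injective hN l hε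
  refine ⟨2 * ‖l‖ / δ ^ 2, fun u hu => ?_⟩
  have hu0 : 0 < ‖u‖ := lt_of_le_of_lt (by positivity) hu
  set v := ‖u‖⁻¹ • u
  have hv : ‖v‖ ≤ 1 := by simp [v, norm_smul, hu0.ne']
  have hNu : ‖N u‖ = ‖u‖ * ‖N v‖ := by simp [v, norm_smul, hu0.ne']
  have hlu : l u = ‖u‖ * l v := by simp [v, hu0.ne']
  unfold humFunctional
  by_cases hlv : l v ≤ -ε
  · have hδu : δ * ‖u‖ ≤ ‖N u‖ := by
      rw [hNu]
      nlinarith [hNδ v hv hlv]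
    have hlu_ge : -(l u) ≤ ‖l‖ * ‖u‖ := (neg_le_abs _).trans (l.le_opNorm u)
    have hR : 2 * ‖l‖ < δ ^ 2 * ‖u‖ := by
      rw [div_lt_iff₀ (by positivity)] at hu
      linarith
    nlinarith [pow_le_pow_left₀ (by positivity) hδu 2, mul_lt_mul_of_pos_left hR hu0]
  · nlinarith [sq_nonneg ‖N u‖]

end Coercivity

theorem stmt_18_general {H K : Type*} [NormedAddCommGroup H] [InnerProductSpace ℝ H]
    [CompleteSpace H] [NormedAddCommGroup K] [InnerProductSpace ℝ K]
    (N : H →L[ℝ] K) (hN : Function.Injective N)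
    (l : H →L[ℝ] ℝ) (ε : ℝ) (hε : 0 < ε)
    (J : H → ℝ) (hJ : ∀ u, J u = ε * ‖u‖ + (1/2) * ‖N u‖^2 + l u) :
    ∃ φ : H, ∀ u : H, J φ ≤ J u := by
  obtain rfl : J = humFunctional N l ε := funext hJ
  obtain ⟨R, hR⟩ := exists_humFunctional_pos_of_lt_norm hN l hε
  obtain ⟨φ, -, hφ⟩ := (convexOn_humFunctional N l hε.le).exists_isMinOn_of_isBounded
    (continuous_humFunctional N l ε).lowerSemicontinuous (convex_closedBall 0 (max R 0))
    isClosed_closedBall isBounded_closedBall (nonempty_closedBall.2 (le_max_right _ _))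
  refine ⟨φ, fun u => ?_⟩
  by_cases hu : ‖u‖ ≤ max R 0
  · exact hφ (mem_closedBall_zero_iff.2 hu)
  · calc humFunctional N l ε φ ≤ humFunctional N l ε 0 :=
          hφ (mem_closedBall_self (le_max_right _ _))
      _ = 0 := by simp [humFunctional]
      _ ≤ humFunctional N l ε u := (hR u ((le_max_left _ _).trans_lt (not_le.1 hu))).le

/-- Abstract form of Lemma 5.4 (existence of a minimizer of the HUM functional): if `N` is an
injective continuous linear map between Hilbert spaces, `ℓ` a continuous linear functional and
`ε > 0`, then `J(u) = ε‖u‖ + (1/2)‖N u‖² + ℓ(u)` attains a global minimum. -/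
theorem stmt_18 {H K : Type*} [NormedAddCommGroup H] [InnerProductSpace ℝ H]
    [CompleteSpace H] [NormedAddCommGroup K] [InnerProductSpace ℝ K] [CompleteSpace K]
    (N : H →L[ℝ] K) (hN : Function.Injective N)
    (l : H →L[ℝ] ℝ) (ε : ℝ) (hε : 0 < ε)
    (J : H → ℝ) (hJ : ∀ u, J u = ε * ‖u‖ + (1/2) * ‖N u‖^2 + l u) :
    ∃ φ : H, ∀ u : H, J φ ≤ J u :=
  stmt_18_general N hN l ε hε J hJ
end
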